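/- For all real g > 0, n ≥ 0 and x with x² ≤ g, setting λ = n/g, the inequality g·H(1/2 + x/(2√g)) + (3g+2n)·H(1/2 + 3x/(2(3+2λ)√g)) ≤ g(2+λ)·log 4 − (6+λ)x²/(3+2λ) holds, provided both arguments of H lie in (0,1). -/

import Mathlib

noncomputable def binEntropy (p : ℝ) : ℝ :=
  -p * Real.log p - (1 - p) * Real.log (1 - p)

/-!
`H(p) + 2 (p - 1/2)²` is concave on `[0, 1]` (its second derivative is `-(2p - 1)² / (p (1 - p))`)
and invariant under `p ↦ 1 - p`, so it is maximal at `p = 1/2`: `H(1/2 + t) ≤ log 2 - 2 t²`.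
Applied to both entropy terms, the two quadratic corrections `x²/2` and `9x²/(2(3 + 2λ))` add up
exactly to `(6 + λ) x² / (3 + 2λ)`.
-/

open Real hiding binEntropy
open Set

lemma binEntropy_eq_real_binEntropy (p : ℝ) : binEntropy p = Real.binEntropy p := by
  simp only [binEntropy, Real.binEntropy, log_inv]
  ring

lemma Real.concaveOn_binEntropy_add_two_mul_sq :
    ConcaveOn ℝ (Icc 0 1) fun p ↦ Real.binEntropy p + 2 * (p - 1 / 2) ^ 2 := by
  refine concaveOn_of_hasDerivWithinAt2_nonpos (convex_Icc 0 1) (by fun_prop)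
    (f' := fun p ↦ log (1 - p) - log p + 4 * (p - 1 / 2))
    (f'' := fun p ↦ -1 / (1 - p) - 1 / p + 4) ?_ ?_ ?_ <;>
    simp only [interior_Icc] <;> rintro p ⟨hp₀, hp₁⟩
  · have := (hasDerivAt_binEntropy hp₀.ne' hp₁.ne).fun_add
      ((((hasDerivAt_id' p).sub_const (1 / 2)).fun_pow 2).const_mul 2)
    exact (this.congr_deriv (by ring)).hasDerivWithinAt
  · have := ((((hasDerivAt_id' p).const_sub 1).log (sub_pos.2 hp₁).ne').fun_sub
      ((hasDerivAt_id' p).log hp₀.ne')).fun_add (((hasDerivAt_id' p).sub_const (1 / 2)).const_mul 4)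
    exact (this.congr_deriv (by ring)).hasDerivWithinAt
  · rw [show -1 / (1 - p) - 1 / p + 4 = -(2 * p - 1) ^ 2 / (p * (1 - p)) by
      field_simp [hp₀.ne', (sub_pos.2 hp₁).ne']; ring]
    exact div_nonpos_of_nonpos_of_nonneg (by nlinarith) (by nlinarith)

lemma Real.binEntropy_le_log_two_sub_two_mul_sq {p : ℝ} (hp₀ : 0 ≤ p) (hp₁ : p ≤ 1) :
    Real.binEntropy p ≤ log 2 - 2 * (p - 1 / 2) ^ 2 := by
  have h := Real.concaveOn_binEntropy_add_two_mul_sq.2 (⟨hp₀, hp₁⟩ : p ∈ Icc 0 1)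
    (⟨by linarith, by linarith⟩ : 1 - p ∈ Icc 0 1) (by norm_num : (0 : ℝ) ≤ 1 / 2)
    (by norm_num : (0 : ℝ) ≤ 1 / 2) (by norm_num)
  simp only [smul_eq_mul, binEntropy_one_sub] at h
  rw [show 1 / 2 * p + 1 / 2 * (1 - p) = (2 : ℝ)⁻¹ by ring, binEntropy_two_inv] at h
  linarith [show (1 - p - 1 / 2) ^ 2 = (p - 1 / 2) ^ 2 by ring]

lemma binEntropy_half_add_le {t : ℝ} (ht : |t| ≤ 1 / 2) :
    binEntropy (1 / 2 + t) ≤ log 2 - 2 * t ^ 2 := by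
  obtain ⟨ht₀, ht₁⟩ := abs_le.1 ht
  have := Real.binEntropy_le_log_two_sub_two_mul_sq (p := 1 / 2 + t) (by linarith) (by linarith)
  rw [binEntropy_eq_real_binEntropy]
  convert this using 2
  ring

theorem entropy_sum_bound (g n x : ℝ) (hg : 0 < g) (hn : 0 ≤ n)
    (hx1 : |x| < Real.sqrt g)
    (hx2 : |3*x / ((3 + 2*(n/g)) * Real.sqrt g)| < 1) :
    g * binEntropy (1/2 + x/(2*Real.sqrt g)) +
      (3*g + 2*n) * binEntropy (1/2 + 3*x/(2*(3 + 2*(n/g))*Real.sqrt g)) ≤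
    g * (2 + n/g) * Real.log 4 - (6 + n/g) * x^2 / (3 + 2*(n/g)) := by
  have hs : 0 < √g := sqrt_pos.2 hg
  have h₁ := binEntropy_half_add_le (t := x / (2 * √g)) <| by
    rw [abs_div, abs_of_pos (by positivity : (0 : ℝ) < 2 * √g), div_le_iff₀ (by positivity)]
    linarith
  have h₂ := binEntropy_half_add_le (t := 3 * x / (2 * (3 + 2 * (n / g)) * √g)) <| by
    rw [show 3 * x / (2 * (3 + 2 * (n / g)) * √g) = 3 * x / ((3 + 2 * (n / g)) * √g) / 2 by
      field_simp, abs_div, abs_two]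
    linarith
  calc _ ≤ g * (log 2 - 2 * (x / (2 * √g)) ^ 2) +
        (3 * g + 2 * n) * (log 2 - 2 * (3 * x / (2 * (3 + 2 * (n / g)) * √g)) ^ 2) := by
        gcongr
    _ = _ := by
      rw [show (4 : ℝ) = 2 ^ 2 by norm_num, log_pow]
      field_simp
      rw [sq_sqrt hg.le]
      ring
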